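/- arXiv:math/0111137 — 9 statements merged into one kernel-verified Lean document; each statement's English description precedes it below -/
import Mathlib

section
/- If α, β are 1-forms on a smooth manifold M with dα = α ∧ β, and γ is a 1-form with dβ = α ∧ γ, then the 3-form β ∧ dβ is closed. -/
/-- An abstract algebra of (differential) forms on a smooth manifold `M`: a normed
`ℝ`-algebra `Ω` (the algebra of smooth differential forms, normed so that one can
speak of smooth/differentiable one-parameter families), equipped with a grading
predicate `IsDeg n a` ("`a` is a homogeneous form of degree `n`") and an exterior
differential `d`, a continuous linear map satisfying the graded Leibniz rule,
graded commutativity and `d ∘ d = 0`. -/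
class FormAlgebra (Ω : Type*) [NormedRing Ω] [NormedAlgebra ℝ Ω] where
  /-- `IsDeg n a` means that `a` is a homogeneous form of degree `n`. -/
  IsDeg : ℕ → Ω → Prop
  /-- The exterior differential. -/
  d : Ω →L[ℝ] Ω
  isDeg_d : ∀ {n : ℕ} {a : Ω}, IsDeg n a → IsDeg (n + 1) (d a)
  isDeg_mul : ∀ {m n : ℕ} {a b : Ω}, IsDeg m a → IsDeg n b → IsDeg (m + n) (a * b)
  d_mul : ∀ {m : ℕ} (a b : Ω), IsDeg m a →
    d (a * b) = d a * b + (-1 : ℝ) ^ m • (a * d b)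
  deg_mul_comm : ∀ {m n : ℕ} (a b : Ω), IsDeg m a → IsDeg n b →
    a * b = (-1 : ℝ) ^ (m * n) • (b * a)
  d_d : ∀ a : Ω, d (d a) = 0

open FormAlgebra

/-! By the Leibniz rule and `d ∘ d = 0`, `d (β ∧ dβ) = dβ ∧ dβ = (α ∧ γ) ∧ (α ∧ γ)`;
moving `γ` past `α` only changes the sign, and `α ∧ α = 0` since `α` has odd degree. -/

namespace FormAlgebra

variable {Ω : Type*} [NormedRing Ω] [NormedAlgebra ℝ Ω] [FormAlgebra Ω]

theorem mul_comm_of_odd {m n : ℕ} {a b : Ω} (ha : IsDeg m a) (hm : Odd m) (hb : IsDeg n b)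
    (hn : Odd n) : a * b = -(b * a) := by
  rw [deg_mul_comm a b ha hb, (hm.mul hn).neg_one_pow, neg_one_smul]

theorem mul_self_eq_zero_of_odd {m : ℕ} {a : Ω} (ha : IsDeg m a) (hm : Odd m) : a * a = 0 := by
  have h : (2 : ℝ) • (a * a) = 0 := by
    rw [two_smul]
    nth_rewrite 1 [mul_comm_of_odd ha hm ha hm]
    exact neg_add_cancel _
  exact (smul_eq_zero.mp h).resolve_left two_ne_zero

theorem mul_mul_self_eq_zero_of_odd {m n : ℕ} {a b : Ω} (ha : IsDeg m a) (hm : Odd m) (hb : IsDeg n b) :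
    a * b * (a * b) = 0 := by
  calc a * b * (a * b) = a * (b * a) * b := by simp only [mul_assoc]
    _ = (-1 : ℝ) ^ (n * m) • (a * a * (b * b)) := by
      rw [deg_mul_comm b a hb ha, mul_smul_comm, smul_mul_assoc]
      simp only [mul_assoc]
    _ = 0 := by rw [mul_self_eq_zero_of_odd ha hm, zero_mul, smul_zero]

theorem d_mul_d_self {m : ℕ} {a : Ω} (ha : IsDeg m a) : d (a * d a) = d a * d a := by
  rw [d_mul a (d a) ha, d_d, mul_zero, smul_zero, add_zero]

end FormAlgebra

theorem statement1_general {Ω : Type*} [NormedRing Ω] [NormedAlgebra ℝ Ω] [FormAlgebra Ω]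
    (α β γ : Ω) (hα : IsDeg 1 α) (hβ : IsDeg 1 β) (hγ : IsDeg 1 γ)
    (h2 : d β = α * γ) :
    d (β * d β) = 0 := by
  rw [d_mul_d_self hβ, h2]
  exact mul_mul_self_eq_zero_of_odd hα odd_one hγ

/-- If `α, β` are 1-forms with `dα = α ∧ β` and `γ` is a 1-form with
`dβ = α ∧ γ`, then the 3-form `β ∧ dβ` is closed. -/
theorem statement1 {Ω : Type*} [NormedRing Ω] [NormedAlgebra ℝ Ω] [FormAlgebra Ω]
    (α β γ : Ω) (hα : IsDeg 1 α) (hβ : IsDeg 1 β) (hγ : IsDeg 1 γ)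
    (h1 : d α = α * β) (h2 : d β = α * γ) :
    d (β * d β) = 0 :=
  statement1_general α β γ hα hβ hγ h2
end

section
/- Let α(t), β(t) be smooth families of 1-forms with dα = α ∧ β, and let τ(t) be a smooth family of 1-forms in the ideal of the foliation (so that all products of two forms among {τ, dτ, dβ, α, ...} lying in the ideal vanish). Then (β̇ + τ̇) ∧ (β + τ) ∧ d(β + τ) − β̇ ∧ β ∧ dβ is an exact 4-form; explicitly it equals d(−β̇ ∧ τ ∧ β − (1/2) τ̇ ∧ τ ∧ β) after using the identities τ̇ ∧ dβ + τ ∧ dβ̇ = 0 and τ̇ ∧ dτ ∧ β = τ ∧ dτ̇ ∧ β derived from differentiating ideal relations in t. -/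
open FormAlgebra

/-- Let `α(t), β(t)` be smooth families of 1-forms with `dα = α ∧ β`, and let
`τ(t)` be a smooth family of 1-forms in the ideal `I(F_t)` of the codimension one
foliation (so that `τ`, `dτ` and `dβ` all lie in the ideal, and the product of any
two elements of the ideal vanishes).  Then
`(β̇ + τ̇) ∧ (β + τ) ∧ d(β + τ) − β̇ ∧ β ∧ dβ = d(−β̇ ∧ τ ∧ β − (1/2) τ̇ ∧ τ ∧ β)`,
an exact 4-form. -/
theorem statement7 {Ω : Type*} [NormedRing Ω] [NormedAlgebra ℝ Ω] [FormAlgebra Ω]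
    (α β τ α' β' τ' : ℝ → Ω) (I : ℝ → Set Ω)
    (hαd : ∀ t, HasDerivAt α (α' t) t)
    (hβd : ∀ t, HasDerivAt β (β' t) t)
    (hτd : ∀ t, HasDerivAt τ (τ' t) t)
    (hα : ∀ t, IsDeg 1 (α t)) (hβ : ∀ t, IsDeg 1 (β t)) (hτ : ∀ t, IsDeg 1 (τ t))
    (hα' : ∀ t, IsDeg 1 (α' t)) (hβ' : ∀ t, IsDeg 1 (β' t)) (hτ' : ∀ t, IsDeg 1 (τ' t))
    (heq : ∀ t, d (α t) = α t * β t)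
    (hprod : ∀ t, ∀ a ∈ I t, ∀ b ∈ I t, a * b = 0)
    (hτI : ∀ t, τ t ∈ I t) (hdτI : ∀ t, d (τ t) ∈ I t) (hdβI : ∀ t, d (β t) ∈ I t) :
    ∀ t, (β' t + τ' t) * (β t + τ t) * d (β t + τ t) - β' t * β t * d (β t)
      = d (-(β' t * τ t * β t) - (1 / 2 : ℝ) • (τ' t * τ t * β t)) := by
  intro t
  -- basic graded algebra helpers
  have comm21 : ∀ x y : Ω, IsDeg 2 x → IsDeg 1 y → x * y = y * x := by
    intro x y hx hy
    rw [deg_mul_comm x y hx hy]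
    norm_num
  have dmul1 : ∀ a b : Ω, IsDeg 1 a → d (a * b) = d a * b - a * d b := by
    intro a b ha
    rw [d_mul a b ha]
    simp [sub_eq_add_neg]
  -- zero products from the ideal
  have z1 : ∀ s, τ s * d (β s) = 0 := fun s => hprod s _ (hτI s) _ (hdβI s)
  have z2 : ∀ s, τ s * d (τ s) = 0 := fun s => hprod s _ (hτI s) _ (hdτI s)
  -- derivatives of the zero products
  have hdβ : HasDerivAt (fun s => d (β s)) (d (β' t)) t :=
    (FormAlgebra.d (Ω := Ω)).hasFDerivAt.comp_hasDerivAt t (hβd t)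
  have hdτ : HasDerivAt (fun s => d (τ s)) (d (τ' t)) t :=
    (FormAlgebra.d (Ω := Ω)).hasFDerivAt.comp_hasDerivAt t (hτd t)
  have did1 : τ' t * d (β t) + τ t * d (β' t) = 0 := by
    have h := (hτd t).mul hdβ
    rw [show (τ * fun s => d (β s)) = fun _ => (0 : Ω) from funext z1] at h
    exact h.unique (hasDerivAt_const t 0)
  have did2 : τ' t * d (τ t) + τ t * d (τ' t) = 0 := by
    have h := (hτd t).mul hdτ
    rw [show (τ * fun s => d (τ s)) = fun _ => (0 : Ω) from funext z2] at h
    exact h.unique (hasDerivAt_const t 0)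
  have f3 : τ t * d (β' t) = -(τ' t * d (β t)) := eq_neg_of_add_eq_zero_right did1
  have f4 : τ t * d (τ' t) = -(τ' t * d (τ t)) := eq_neg_of_add_eq_zero_right did2
  -- commutation lemmas oriented for rewriting
  have c1 : ∀ x : Ω, d (β' t) * (τ t * x) = -(τ' t * (d (β t) * x)) := by
    intro x
    rw [← mul_assoc, comm21 _ _ (isDeg_d (hβ' t)) (hτ t), f3, neg_mul, mul_assoc]
  have c2 : ∀ x : Ω, d (τ' t) * (τ t * x) = -(τ' t * (d (τ t) * x)) := by
    intro x
    rw [← mul_assoc, comm21 _ _ (isDeg_d (hτ' t)) (hτ t), f4, neg_mul, mul_assoc]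
  have c3 : d (τ t) * β t = β t * d (τ t) := comm21 _ _ (isDeg_d (hτ t)) (hβ t)
  have c4 : d (β t) * β t = β t * d (β t) := comm21 _ _ (isDeg_d (hβ t)) (hβ t)
  -- compute the right-hand side
  have hR : d (-(β' t * τ t * β t) - (1 / 2 : ℝ) • (τ' t * τ t * β t))
      = β' t * (β t * d (τ t)) + τ' t * (β t * d (β t)) + τ' t * (β t * d (τ t)) := by
    rw [mul_assoc (β' t), mul_assoc (τ' t), map_sub, map_neg, map_smul,
      dmul1 _ _ (hβ' t), dmul1 _ _ (hτ' t), dmul1 _ _ (hτ t), z1 t, sub_zero,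
      c1, c2, c3, c4]
    module
  rw [hR, map_add]
  simp only [mul_add, add_mul, mul_assoc, z1 t, z2 t, mul_zero, add_zero]
  abel
end

section
/- Let α(t), β(t), γ(t), δ(t) be smooth families of 1-forms with dα = α ∧ β, dβ = α ∧ γ, and dγ = β ∧ γ + α ∧ δ. Then β̇ ∧ β ∧ dβ = d(α̇ ∧ β ∧ γ) − α̇ ∧ β ∧ α ∧ δ. In particular, if γ = 0 or δ = 0 or β = 0, the form β̇ ∧ β ∧ dβ is exact. -/
open FormAlgebra

section aux
variable {Ω : Type*} [NormedRing Ω] [NormedAlgebra ℝ Ω] [FormAlgebra Ω]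

lemma FA.anticomm {a b : Ω} (ha : IsDeg 1 a) (hb : IsDeg 1 b) : a * b = -(b * a) := by
  simpa using deg_mul_comm a b ha hb

lemma FA.sq_zero {a : Ω} (ha : IsDeg 1 a) : a * a = 0 := by
  have h : a * a = -(a * a) := FA.anticomm ha ha
  have h2 : (2 : ℝ) • (a * a) = 0 := by
    rw [two_smul]; nth_rewrite 2 [h]; simp
  have := congrArg (fun x => (2 : ℝ)⁻¹ • x) h2
  simpa [smul_smul] using this

lemma FA.hasDerivAt_d {f : ℝ → Ω} {f' : Ω} {t : ℝ} (hf : HasDerivAt f f' t) :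
    HasDerivAt (fun s => d (f s)) (d f') t :=
  (FormAlgebra.d (Ω := Ω)).hasFDerivAt.comp_hasDerivAt t hf

end aux

/-- Let `α(t), β(t), γ(t), δ(t)` be smooth families of 1-forms with `dα = α ∧ β`,
`dβ = α ∧ γ`, and `dγ = β ∧ γ + α ∧ δ`.  Then
`β̇ ∧ β ∧ dβ = d(α̇ ∧ β ∧ γ) − α̇ ∧ β ∧ α ∧ δ`.
In particular, if `γ = 0` or `δ = 0` or `β = 0`, the form `β̇ ∧ β ∧ dβ` is exact. -/
theorem statement9 {Ω : Type*} [NormedRing Ω] [NormedAlgebra ℝ Ω] [FormAlgebra Ω]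
    (α β γ δ α' β' γ' δ' : ℝ → Ω)
    (hαd : ∀ t, HasDerivAt α (α' t) t)
    (hβd : ∀ t, HasDerivAt β (β' t) t)
    (hγd : ∀ t, HasDerivAt γ (γ' t) t)
    (hδd : ∀ t, HasDerivAt δ (δ' t) t)
    (hα : ∀ t, IsDeg 1 (α t)) (hβ : ∀ t, IsDeg 1 (β t))
    (hγ : ∀ t, IsDeg 1 (γ t)) (hδ : ∀ t, IsDeg 1 (δ t))
    (hα' : ∀ t, IsDeg 1 (α' t)) (hβ' : ∀ t, IsDeg 1 (β' t))
    (hγ' : ∀ t, IsDeg 1 (γ' t)) (hδ' : ∀ t, IsDeg 1 (δ' t))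
    (heq1 : ∀ t, d (α t) = α t * β t)
    (heq2 : ∀ t, d (β t) = α t * γ t)
    (heq3 : ∀ t, d (γ t) = β t * γ t + α t * δ t) :
    (∀ t, β' t * β t * d (β t) = d (α' t * β t * γ t) - α' t * β t * α t * δ t) ∧
      (∀ t, γ t = 0 ∨ δ t = 0 ∨ β t = 0 →
        ∃ η : Ω, β' t * β t * d (β t) = d η) := by
  have main : ∀ t, β' t * β t * d (β t)
      = d (α' t * β t * γ t) - α' t * β t * α t * δ t := by
    intro t
    -- derivative of the structure equation dα = α β
    have hdA' : d (α' t) = α' t * β t + α t * β' t := by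
      have h1 : HasDerivAt (fun s => d (α s)) (d (α' t)) t := FA.hasDerivAt_d (hαd t)
      have h2 : HasDerivAt (fun s => α s * β s) (α' t * β t + α t * β' t) t :=
        (hαd t).mul (hβd t)
      have h1' : HasDerivAt (fun s => α s * β s) (d (α' t)) t := by
        refine h1.congr_of_eventuallyEq ?_
        filter_upwards with s using (heq1 s).symm
      exact h1'.unique h2
    set A := α t; set B := β t; set G := γ t; set D := δ t
    set A' := α' t; set B' := β' t
    have hBB : B * B = 0 := FA.sq_zero (hβ t)
    have hGG : G * G = 0 := FA.sq_zero (hγ t)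
    have hab : A * B' = -(B' * A) := FA.anticomm (hα t) (hβ' t)
    have hab2 : A * B = -(B * A) := FA.anticomm (hα t) (hβ t)
    have hd1 : d (A' * B) = d A' * B - A' * d B := by
      rw [d_mul A' B (hα' t)]; simp [sub_eq_add_neg]
    have hd2 : d (A' * B * G) = d (A' * B) * G + A' * B * d G := by
      rw [d_mul (A' * B) G (isDeg_mul (hα' t) (hβ t))]; norm_num
    rw [hd2, hd1, hdA', heq2, heq3]
    -- now pure (anti)commutative algebra
    simp only [add_mul, sub_mul, mul_add, mul_assoc]
    rw [show B * (B * G) = 0 by rw [← mul_assoc, hBB, zero_mul]]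
    rw [show G * (G : Ω) = 0 from hGG]
    have key : A * (B' * (B * G)) = B' * (B * (A * G)) := by
      rw [← mul_assoc, hab, neg_mul, mul_assoc, ← mul_assoc A B, hab2]
      simp [mul_assoc]
    rw [key]
    simp [mul_assoc]
    exact (add_sub_cancel_right _ _).symm
  refine ⟨main, fun t h => ?_⟩
  rcases h with h | h | h
  · exact ⟨0, by simp [heq2 t, h]⟩
  · exact ⟨α' t * β t * γ t, by rw [main t, h]; simp⟩
  · exact ⟨0, by simp [h]⟩
end

section
/- Let α(t), β(t), γ(t), δ(t), ε(t) be smooth families of 1-forms satisfying dα = α ∧ β, dβ = α ∧ γ, dγ = β ∧ γ + α ∧ δ, dδ = 2β ∧ δ + α ∧ ε. If δ is closed (dδ = 0) for all t, then β̇ ∧ β ∧ dβ is an exact 4-form. -/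
open FormAlgebra

lemma FA.anticomm_s10 {Ω : Type*} [NormedRing Ω] [NormedAlgebra ℝ Ω] [FormAlgebra Ω]
    {x y : Ω} (hx : IsDeg 1 x) (hy : IsDeg 1 y) : x * y = -(y * x) := by
  simpa using deg_mul_comm x y hx hy

lemma FA.sq_zero_s10 {Ω : Type*} [NormedRing Ω] [NormedAlgebra ℝ Ω] [FormAlgebra Ω]
    {x : Ω} (hx : IsDeg 1 x) : x * x = 0 := by
  have h : x * x = -(x * x) := FA.anticomm_s10 hx hx
  have h2 : (2:ℝ) • (x * x) = 0 := by
    rw [two_smul]; nth_rewrite 1 [h]; exact neg_add_cancel _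
  rcases smul_eq_zero.mp h2 with h | h
  · norm_num at h
  · exact h

/-- Let `α(t), β(t), γ(t), δ(t), ε(t)` be smooth families of 1-forms satisfying
`dα = α ∧ β`, `dβ = α ∧ γ`, `dγ = β ∧ γ + α ∧ δ`, `dδ = 2β ∧ δ + α ∧ ε`.
If `δ` is closed (`dδ = 0`) for all `t`, then `β̇ ∧ β ∧ dβ` is an exact 4-form,
i.e. the Godbillon-Vey variation class `TGV(F_t)` vanishes in de Rham cohomology. -/
theorem statement10 {Ω : Type*} [NormedRing Ω] [NormedAlgebra ℝ Ω] [FormAlgebra Ω]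
    (α β γ δ ε α' β' γ' δ' ε' : ℝ → Ω)
    (hαd : ∀ t, HasDerivAt α (α' t) t)
    (hβd : ∀ t, HasDerivAt β (β' t) t)
    (hγd : ∀ t, HasDerivAt γ (γ' t) t)
    (hδd : ∀ t, HasDerivAt δ (δ' t) t)
    (hεd : ∀ t, HasDerivAt ε (ε' t) t)
    (hα : ∀ t, IsDeg 1 (α t)) (hβ : ∀ t, IsDeg 1 (β t))
    (hγ : ∀ t, IsDeg 1 (γ t)) (hδ : ∀ t, IsDeg 1 (δ t)) (hε : ∀ t, IsDeg 1 (ε t))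
    (hα' : ∀ t, IsDeg 1 (α' t)) (hβ' : ∀ t, IsDeg 1 (β' t))
    (hγ' : ∀ t, IsDeg 1 (γ' t)) (hδ' : ∀ t, IsDeg 1 (δ' t))
    (heq1 : ∀ t, d (α t) = α t * β t)
    (heq2 : ∀ t, d (β t) = α t * γ t)
    (heq3 : ∀ t, d (γ t) = β t * γ t + α t * δ t)
    (heq4 : ∀ t, d (δ t) = (2 : ℝ) • (β t * δ t) + α t * ε t)
    (hclosed : ∀ t, d (δ t) = 0) :
    ∀ t, ∃ η : Ω, IsDeg 3 η ∧ β' t * β t * d (β t) = d η := by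
  intro t
  refine ⟨α' t * (β t * γ t), ?_, ?_⟩
  · exact isDeg_mul (hα' t) (isDeg_mul (hβ t) (hγ t))
  · have hda' : d (α' t) = α' t * β t + α t * β' t := by
      have h1 : HasDerivAt (fun s => (d : Ω →L[ℝ] Ω) (α s)) (d (α' t)) t :=
        (FormAlgebra.d (Ω := Ω)).hasFDerivAt.comp_hasDerivAt t (hαd t)
      have h3 : (fun s => (d : Ω →L[ℝ] Ω) (α s)) = fun s => α s * β s := funext heq1
      rw [h3] at h1
      exact h1.unique ((hαd t).mul (hβd t))
    have habe : α t * (β t * δ t) = 0 := by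
      have h0 : (2:ℝ) • (β t * δ t) = -(α t * ε t) :=
        eq_neg_of_add_eq_zero_left (((heq4 t).symm).trans (hclosed t))
      have h1 : (2:ℝ) • (α t * (β t * δ t)) = 0 := by
        rw [← mul_smul_comm, h0, mul_neg, ← mul_assoc, FA.sq_zero_s10 (hα t), zero_mul, neg_zero]
      rcases smul_eq_zero.mp h1 with h | h
      · norm_num at h
      · exact h
    have hbb := FA.sq_zero_s10 (hβ t)
    have hcc := FA.sq_zero_s10 (hγ t)
    have hba : β t * α t = -(α t * β t) := FA.anticomm_s10 (hβ t) (hα t)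
    have hab : α t * β t = -(β t * α t) := FA.anticomm_s10 (hα t) (hβ t)
    have hab' : α t * β' t = -(β' t * α t) := FA.anticomm_s10 (hα t) (hβ' t)
    rw [d_mul _ _ (hα' t), d_mul _ _ (hβ t), hda', heq2, heq3]
    have e1 : (α' t * β t) * (β t * γ t) = 0 := by
      rw [mul_assoc, ← mul_assoc (β t), hbb, zero_mul, mul_zero]
    have e2 : (α t * β' t) * (β t * γ t) = β' t * β t * (α t * γ t) := by
      rw [hab', neg_mul, mul_assoc (β' t), ← mul_assoc (α t), hab, neg_mul, mul_neg,
        neg_neg, mul_assoc (β t) (α t), ← mul_assoc (β' t)]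
    have e3 : (α t * γ t) * γ t = 0 := by
      rw [mul_assoc, hcc, mul_zero]
    have e4 : β t * (β t * γ t + α t * δ t) = 0 := by
      rw [mul_add, ← mul_assoc, hbb, zero_mul, ← mul_assoc, hba, neg_mul, mul_assoc,
        habe, neg_zero, add_zero]
    rw [add_mul, e1, e2, e3, e4]
    simp
end

section
/- Let α(t), β(t) be smooth families of 1-forms with dα = α ∧ β. Then (d/dt)(β ∧ dβ) = 2 β̇ ∧ dβ + d(β̇ ∧ β). Consequently, the time-derivative of the Godbillon-Vey class GV(F_t) = [β ∧ dβ] equals twice the de Rham class of β̇ ∧ dβ. -/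
open FormAlgebra

/-- Let `α(t), β(t)` be smooth families of 1-forms with `dα = α ∧ β`.  Then
`(d/dt)(β ∧ dβ) = 2 β̇ ∧ dβ + d(β̇ ∧ β)`.  Consequently, the time-derivative of
the Godbillon-Vey class `GV(F_t) = [β ∧ dβ]` equals twice the de Rham class of
`β̇ ∧ dβ`. -/
theorem statement13 {Ω : Type*} [NormedRing Ω] [NormedAlgebra ℝ Ω] [FormAlgebra Ω]
    (α β α' β' : ℝ → Ω)
    (hαd : ∀ t, HasDerivAt α (α' t) t)
    (hβd : ∀ t, HasDerivAt β (β' t) t)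
    (hα : ∀ t, IsDeg 1 (α t)) (hβ : ∀ t, IsDeg 1 (β t))
    (hα' : ∀ t, IsDeg 1 (α' t)) (hβ' : ∀ t, IsDeg 1 (β' t))
    (heq : ∀ t, d (α t) = α t * β t) :
    ∀ t, HasDerivAt (fun s => β s * d (β s))
      ((2 : ℝ) • (β' t * d (β t)) + d (β' t * β t)) t := by
  intro t
  have h1 : HasDerivAt (fun s => d (β s)) (d (β' t)) t :=
    ((FormAlgebra.d (Ω := Ω)).hasFDerivAt.comp_hasDerivAt t (hβd t))
  have h2 := (hβd t).mul h1
  convert h2 using 1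
  · rfl
  have hdm := d_mul (m := 1) (β' t) (β t) (hβ' t)
  have hc := deg_mul_comm (m := 1) (n := 2) (β t) (d (β' t)) (hβ t) (isDeg_d (hβ' t))
  norm_num at hdm hc
  rw [hdm, hc, two_smul]
  abel
end

section
/- Let α(t), β(t), γ(t), δ(t) be smooth families of 1-forms with dα = α ∧ β, dβ = α ∧ γ, dγ = β ∧ γ + α ∧ δ. Then β̇ ∧ dβ = d(α ∧ γ̇) + α ∧ α̇ ∧ δ. In particular, if δ = 0 for all t (transversely homographic case), then β̇ ∧ dβ is exact with primitive α ∧ γ̇ lying in the ideal of the foliation. -/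
open FormAlgebra

/-! Differentiating `dα = α ∧ β` and `dβ = α ∧ γ` in `t` gives `dα̇ = α̇ ∧ β + α ∧ β̇` and
`α ∧ γ̇ = dβ̇ - α̇ ∧ γ`. Hence `d(α ∧ γ̇) = -d(α̇ ∧ γ) = -dα̇ ∧ γ + α̇ ∧ dγ`, and substituting the
structure equations leaves `-α ∧ β̇ ∧ γ + α̇ ∧ α ∧ δ`, which by anticommutativity of
1-forms is `β̇ ∧ dβ - α ∧ α̇ ∧ δ`. -/

namespace FormAlgebra

variable {Ω : Type*} [NormedRing Ω] [NormedAlgebra ℝ Ω] [FormAlgebra Ω]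

theorem mul_comm_of_isDeg_one {a b : Ω} (ha : IsDeg 1 a) (hb : IsDeg 1 b) :
    a * b = -(b * a) := by
  simpa using deg_mul_comm a b ha hb

theorem d_mul_of_isDeg_one {a : Ω} (b : Ω) (ha : IsDeg 1 a) :
    d (a * b) = d a * b - a * d b := by
  simp [d_mul a b ha, sub_eq_add_neg]

theorem d_hasDerivAt_eq_of_d_eq_mul {x y z : ℝ → Ω} {x' y' z' : Ω} {t : ℝ}
    (hx : HasDerivAt x x' t) (hy : HasDerivAt y y' t) (hz : HasDerivAt z z' t)
    (h : ∀ s, d (x s) = y s * z s) :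
    d x' = y' * z t + y t * z' :=
  ((d : Ω →L[ℝ] Ω).hasFDerivAt.comp_hasDerivAt t hx).unique <|
    (hy.mul hz).congr_of_eventuallyEq (.of_forall h)

theorem mul_d_eq_d_add_of_structure_eqs {a b c e a' b' c' : Ω}
    (ha : IsDeg 1 a) (ha' : IsDeg 1 a') (hb' : IsDeg 1 b')
    (hdb : d b = a * c) (hdc : d c = b * c + a * e)
    (hda' : d a' = a' * b + a * b') (hdb' : d b' = a' * c + a * c') :
    b' * d b = d (a * c') + a * a' * e := by
  have hac' : a * c' = d b' - a' * c := by rw [hdb']; abel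
  calc b' * d b = -(a * b' * c) := by
        rw [hdb, ← mul_assoc, mul_comm_of_isDeg_one hb' ha, neg_mul]
    _ = d (a * c') + a * a' * e := by
        rw [hac', map_sub, d_d, d_mul_of_isDeg_one c ha', hda', hdc,
          mul_comm_of_isDeg_one ha ha']
        noncomm_ring

end FormAlgebra

theorem statement14_general {Ω : Type*} [NormedRing Ω] [NormedAlgebra ℝ Ω] [FormAlgebra Ω]
    (α β γ δ α' β' γ' : ℝ → Ω)
    (hαd : ∀ t, HasDerivAt α (α' t) t)
    (hβd : ∀ t, HasDerivAt β (β' t) t)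
    (hγd : ∀ t, HasDerivAt γ (γ' t) t)
    (hα : ∀ t, IsDeg 1 (α t))
    (hα' : ∀ t, IsDeg 1 (α' t)) (hβ' : ∀ t, IsDeg 1 (β' t))
    (heq1 : ∀ t, d (α t) = α t * β t)
    (heq2 : ∀ t, d (β t) = α t * γ t)
    (heq3 : ∀ t, d (γ t) = β t * γ t + α t * δ t) :
    (∀ t, β' t * d (β t) = d (α t * γ' t) + α t * α' t * δ t) ∧
      (∀ t, δ t = 0 → β' t * d (β t) = d (α t * γ' t)) := by
  have key : ∀ t, β' t * d (β t) = d (α t * γ' t) + α t * α' t * δ t := fun t =>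
    mul_d_eq_d_add_of_structure_eqs (hα t) (hα' t) (hβ' t) (heq2 t) (heq3 t)
      (d_hasDerivAt_eq_of_d_eq_mul (hαd t) (hαd t) (hβd t) heq1)
      (d_hasDerivAt_eq_of_d_eq_mul (hβd t) (hαd t) (hγd t) heq2)
  refine ⟨key, fun t hδ0 => ?_⟩
  simpa [hδ0] using key t

/-- Let `α(t), β(t), γ(t), δ(t)` be smooth families of 1-forms with `dα = α ∧ β`,
`dβ = α ∧ γ`, `dγ = β ∧ γ + α ∧ δ`.  Then `β̇ ∧ dβ = d(α ∧ γ̇) + α ∧ α̇ ∧ δ`.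
In particular, if `δ = 0` for all `t` (the transversely homographic case), then
`β̇ ∧ dβ` is exact with primitive `α ∧ γ̇` lying in the ideal of the foliation. -/
theorem statement14 {Ω : Type*} [NormedRing Ω] [NormedAlgebra ℝ Ω] [FormAlgebra Ω]
    (α β γ δ α' β' γ' : ℝ → Ω)
    (hαd : ∀ t, HasDerivAt α (α' t) t)
    (hβd : ∀ t, HasDerivAt β (β' t) t)
    (hγd : ∀ t, HasDerivAt γ (γ' t) t)
    (hα : ∀ t, IsDeg 1 (α t)) (hβ : ∀ t, IsDeg 1 (β t))
    (hγ : ∀ t, IsDeg 1 (γ t)) (hδ : ∀ t, IsDeg 1 (δ t))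
    (hα' : ∀ t, IsDeg 1 (α' t)) (hβ' : ∀ t, IsDeg 1 (β' t)) (hγ' : ∀ t, IsDeg 1 (γ' t))
    (heq1 : ∀ t, d (α t) = α t * β t)
    (heq2 : ∀ t, d (β t) = α t * γ t)
    (heq3 : ∀ t, d (γ t) = β t * γ t + α t * δ t) :
    (∀ t, β' t * d (β t) = d (α t * γ' t) + α t * α' t * δ t) ∧
      (∀ t, δ t = 0 → β' t * d (β t) = d (α t * γ' t)) :=
  statement14_general α β γ δ α' β' γ' hαd hβd hγd hα hα' hβ' heq1 heq2 heq3
end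

section
/- Let β(t), τ(t) be smooth families of 1-forms and q ≥ 1, with the (q+1)-fold vanishing property: any wedge product involving q+1 factors from {τ, dτ, dβ, β̇∧(ideal)} lying in the foliation ideal vanishes; in particular τ ∧ (dβ)^i ∧ (dτ)^{q−i} = 0 for all 0 ≤ i ≤ q. Then for 0 ≤ i ≤ q−2: β̇ ∧ (dβ)^i ∧ (dτ)^{q−i} + ((q−i)/(i+1)) τ̇ ∧ (dβ)^{i+1} ∧ (dτ)^{q−i−1} = ((q−i−1)/(i+1)) d(τ ∧ τ̇ ∧ (dβ)^{i+1} ∧ (dτ)^{q−i−2}) − d(β̇ ∧ τ ∧ (dβ)^i ∧ (dτ)^{q−i−1}). -/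
open FormAlgebra

section helpers
variable {Ω : Type*} [NormedRing Ω] [NormedAlgebra ℝ Ω] [FormAlgebra Ω]

lemma comm12 {a x : Ω} (ha : IsDeg 1 a) (hx : IsDeg 2 x) : a * x = x * a := by
  rw [deg_mul_comm a x ha hx]; norm_num

lemma comm22 {x y : Ω} (hx : IsDeg 2 x) (hy : IsDeg 2 y) : x * y = y * x := by
  rw [deg_mul_comm x y hx hy]; norm_num

lemma d_mul_one {a b : Ω} (ha : IsDeg 1 a) :
    d (a * b) = d a * b - a * d b := by
  rw [d_mul a b ha]; simp [sub_eq_add_neg]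

lemma d_pow_succ {x : Ω} (hx : IsDeg 2 x) (hdx : d x = 0) (n : ℕ) :
    d (x ^ (n+1) : Ω) = 0 := by
  induction n with
  | zero => simpa using hdx
  | succ n ih =>
    rw [pow_succ', d_mul x (x^(n+1)) hx, hdx, ih]
    simp

lemma isDeg_pow_succ {x : Ω} (hx : IsDeg 2 x) (n : ℕ) : IsDeg (2*n+2) (x^(n+1)) := by
  induction n with
  | zero => simpa using hx
  | succ n ih =>
    have h := isDeg_mul hx ih
    have e : 2 + (2*n+2) = 2*(n+1)+2 := by omega
    rw [e] at h
    rwa [pow_succ']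

lemma d_pow_mul_pow {x y : Ω} (hx : IsDeg 2 x) (hy : IsDeg 2 y)
    (hdx : d x = 0) (hdy : d y = 0) (m k : ℕ) (h : 1 ≤ m + k) :
    d ((x ^ m) * (y ^ k) : Ω) = 0 := by
  match m, k with
  | 0, 0 => omega
  | 0, k+1 => simpa using d_pow_succ hy hdy k
  | m+1, 0 => simpa using d_pow_succ hx hdx m
  | m+1, k+1 =>
    rw [d_mul _ _ (isDeg_pow_succ hx m), d_pow_succ hx hdx m, d_pow_succ hy hdy k]
    simp

lemma hasDerivAt_pow_succ' {g : ℝ → Ω} {g' : Ω} {t : ℝ}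
    (hg : HasDerivAt g g' t) (hc : g' * g t = g t * g') (n : ℕ) :
    HasDerivAt (fun s => g s ^ (n+1)) (((n:ℝ)+1) • (g' * g t ^ n)) t := by
  induction n with
  | zero => simpa using hg
  | succ n ih =>
    have h := ih.mul hg
    have e1 : ((fun s => g s ^ (n+1)) * g) = fun s => g s ^ (n+1+1) := by
      funext s; show g s ^ (n+1) * g s = _; rw [← pow_succ]
    rw [e1] at h
    convert h using 1
    have hcm : Commute g' (g t) := hc
    have h2 : g t ^ (n+1) * g' = g' * g t ^ (n+1) := ((hcm.pow_right (n+1)).eq).symm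
    rw [h2, smul_mul_assoc, mul_assoc, ← pow_succ]
    push_cast
    match_scalars
    ring

lemma prod_vanish {q : ℕ} {I : Set Ω}
    (hvanish : ∀ (f : Fin (q + 1) → Ω), (∀ i, f i ∈ I) → (List.ofFn f).prod = 0)
    (L : List Ω) (hL : L.length = q+1) (hmem : ∀ x ∈ L, x ∈ I) : L.prod = (0 : Ω) := by
  rw [show q+1 = L.length from hL.symm] at hvanish
  have h := hvanish L.get (fun j => hmem _ (L.get_mem _))
  rwa [List.ofFn_get] at h

end helpers

/-- Let `β(t), τ(t)` be smooth families of 1-forms and `q ≥ 1`, where `τ`, `dτ`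
and `dβ` lie in the ideal `I(t)` of a family of codimension `q` foliations, all
`(q+1)`-fold wedge products of whose elements vanish.  Then for `0 ≤ i ≤ q − 2`:
`β̇ ∧ (dβ)^i ∧ (dτ)^(q−i) + ((q−i)/(i+1)) τ̇ ∧ (dβ)^(i+1) ∧ (dτ)^(q−i−1)
 = ((q−i−1)/(i+1)) d(τ ∧ τ̇ ∧ (dβ)^(i+1) ∧ (dτ)^(q−i−2))
   − d(β̇ ∧ τ ∧ (dβ)^i ∧ (dτ)^(q−i−1))`. -/
theorem statement17 {Ω : Type*} [NormedRing Ω] [NormedAlgebra ℝ Ω] [FormAlgebra Ω]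
    (q : ℕ) (hq : 1 ≤ q) (β τ β' τ' : ℝ → Ω) (I : ℝ → Set Ω)
    (hβd : ∀ t, HasDerivAt β (β' t) t)
    (hτd : ∀ t, HasDerivAt τ (τ' t) t)
    (hβ : ∀ t, IsDeg 1 (β t)) (hτ : ∀ t, IsDeg 1 (τ t))
    (hβ' : ∀ t, IsDeg 1 (β' t)) (hτ' : ∀ t, IsDeg 1 (τ' t))
    (hvanish : ∀ t (f : Fin (q + 1) → Ω), (∀ i, f i ∈ I t) → (List.ofFn f).prod = 0)
    (hτI : ∀ t, τ t ∈ I t) (hdτI : ∀ t, d (τ t) ∈ I t) (hdβI : ∀ t, d (β t) ∈ I t) :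
    ∀ t, ∀ i : ℕ, i + 2 ≤ q →
      β' t * (d (β t)) ^ i * (d (τ t)) ^ (q - i)
          + (((q : ℝ) - i) / ((i : ℝ) + 1))
            • (τ' t * (d (β t)) ^ (i + 1) * (d (τ t)) ^ (q - i - 1))
        = (((q : ℝ) - i - 1) / ((i : ℝ) + 1))
            • d (τ t * τ' t * (d (β t)) ^ (i + 1) * (d (τ t)) ^ (q - i - 2))
          - d (β' t * τ t * (d (β t)) ^ i * (d (τ t)) ^ (q - i - 1)) := by
  intro t i hi
  obtain ⟨k, hk⟩ : ∃ k, q = i + 2 + k := ⟨q - (i+2), by omega⟩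
  have E2 : q - i - 1 = k + 1 := by omega
  have E3 : q - i - 2 = k := by omega
  have E1 : q - i = k + 2 := by omega
  rw [E2, E3, E1]
  -- notation
  have hs : IsDeg 1 (τ t) := hτ t
  have ha : IsDeg 1 (β' t) := hβ' t
  have hu : IsDeg 1 (τ' t) := hτ' t
  have hB2 : IsDeg 2 (d (β t)) := isDeg_d (hβ t)
  have hT2 : IsDeg 2 (d (τ t)) := isDeg_d (hτ t)
  have hA2 : IsDeg 2 (d (β' t)) := isDeg_d (hβ' t)
  have hU2 : IsDeg 2 (d (τ' t)) := isDeg_d (hτ' t)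
  have hdB : d (d (β t)) = 0 := d_d _
  have hdT : d (d (τ t)) = 0 := d_d _
  have hBT : Commute (d (β t)) (d (τ t)) := comm22 hB2 hT2
  have hBU : Commute (d (β t)) (d (τ' t)) := comm22 hB2 hU2
  -- the vanishing family
  have hzero : ∀ t', τ t' * (d (β t'))^(i+1) * (d (τ t'))^(k+1) = 0 := by
    intro t'
    have h := prod_vanish (hvanish t')
      (τ t' :: (List.replicate (i+1) (d (β t')) ++ List.replicate (k+1) (d (τ t'))))
      (by simp; omega)
      (by
        intro x hx
        simp only [List.mem_cons, List.mem_append, List.mem_replicate] at hx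
        rcases hx with rfl | ⟨_, rfl⟩ | ⟨_, rfl⟩
        · exact hτI t'
        · exact hdβI t'
        · exact hdτI t')
    simpa [List.prod_cons, List.prod_append, List.prod_replicate, mul_assoc] using h
  -- derivatives
  have hBd : HasDerivAt (fun s => d (β s)) (d (β' t)) t :=
    (FormAlgebra.d (Ω := Ω)).hasFDerivAt.comp_hasDerivAt t (hβd t)
  have hTd : HasDerivAt (fun s => d (τ s)) (d (τ' t)) t :=
    (FormAlgebra.d (Ω := Ω)).hasFDerivAt.comp_hasDerivAt t (hτd t)
  have hpB : HasDerivAt (fun s => d (β s) ^ (i+1))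
      (((i:ℝ)+1) • (d (β' t) * d (β t) ^ i)) t :=
    hasDerivAt_pow_succ' hBd (comm22 hA2 hB2) i
  have hpT : HasDerivAt (fun s => d (τ s) ^ (k+1))
      (((k:ℝ)+1) • (d (τ' t) * d (τ t) ^ k)) t :=
    hasDerivAt_pow_succ' hTd (comm22 hU2 hT2) k
  have hGd : HasDerivAt (fun s => τ s * (d (β s) ^ (i+1) * d (τ s) ^ (k+1)))
      (τ' t * (d (β t) ^ (i+1) * d (τ t) ^ (k+1))
        + τ t * ((((i:ℝ)+1) • (d (β' t) * d (β t) ^ i)) * d (τ t) ^ (k+1)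
          + d (β t) ^ (i+1) * (((k:ℝ)+1) • (d (τ' t) * d (τ t) ^ k)))) t :=
    (hτd t).mul (hpB.mul hpT)
  have h0 : HasDerivAt (fun s => τ s * (d (β s) ^ (i+1) * d (τ s) ^ (k+1))) 0 t := by
    have hfun : (fun s => τ s * (d (β s) ^ (i+1) * d (τ s) ^ (k+1))) = fun _ => (0:Ω) := by
      funext s'
      rw [← mul_assoc]
      exact hzero s'
    rw [hfun]
    exact hasDerivAt_const t 0
  have key0 := hGd.unique h0
  -- normalize
  have hBUc : d (β t)^(i+1) * (d (τ' t) * d (τ t)^k)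
      = d (τ' t) * (d (β t)^(i+1) * d (τ t)^k) := by
    rw [← mul_assoc, (hBU.pow_left (i+1)).eq, mul_assoc]
  have key : (τ' t * (d (β t) ^ (i+1) * d (τ t) ^ (k+1)))
      + ((i:ℝ)+1) • (τ t * (d (β' t) * (d (β t) ^ i * d (τ t) ^ (k+1))))
      + ((k:ℝ)+1) • (τ t * (d (τ' t) * (d (β t) ^ (i+1) * d (τ t) ^ k))) = 0 := by
    have e1 : τ t * ((((i:ℝ)+1) • (d (β' t) * d (β t)^i)) * d (τ t)^(k+1)
          + d (β t)^(i+1) * (((k:ℝ)+1) • (d (τ' t) * d (τ t)^k)))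
        = ((i:ℝ)+1) • (τ t * (d (β' t) * (d (β t)^i * d (τ t)^(k+1))))
          + ((k:ℝ)+1) • (τ t * (d (τ' t) * (d (β t)^(i+1) * d (τ t)^k))) := by
      rw [mul_add, smul_mul_assoc, mul_smul_comm, mul_smul_comm, mul_assoc (d (β' t)), hBUc, mul_smul_comm]
    rw [e1, ← add_assoc] at key0
    exact key0
  -- d expansions
  have hdZ1 : d (d (β t)^(i+1) * d (τ t)^k) = 0 :=
    d_pow_mul_pow hB2 hT2 hdB hdT (i+1) k (by omega)
  have hdY2 : d (d (β t)^i * d (τ t)^(k+1)) = 0 :=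
    d_pow_mul_pow hB2 hT2 hdB hdT i (k+1) (by omega)
  have expand1 : d (τ t * (τ' t * (d (β t)^(i+1) * d (τ t)^k)))
      = τ' t * (d (β t)^(i+1) * d (τ t)^(k+1))
        - τ t * (d (τ' t) * (d (β t)^(i+1) * d (τ t)^k)) := by
    rw [d_mul_one hs, d_mul_one hu, hdZ1, mul_zero, sub_zero]
    congr 1
    rw [← mul_assoc, ← comm12 hu hT2, mul_assoc]
    congr 1
    rw [← mul_assoc, (hBT.symm.pow_right (i+1)).eq, mul_assoc, ← pow_succ']
  have expand2 : d (β' t * (τ t * (d (β t)^i * d (τ t)^(k+1))))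
      = τ t * (d (β' t) * (d (β t)^i * d (τ t)^(k+1)))
        - β' t * (d (β t)^i * d (τ t)^(k+2)) := by
    rw [d_mul_one ha, d_mul_one hs, hdY2, mul_zero, sub_zero]
    congr 1
    · rw [← mul_assoc, ← comm12 hs hA2, mul_assoc]
    · congr 1
      rw [← mul_assoc, (hBT.symm.pow_right i).eq, mul_assoc, ← pow_succ']
  -- rearrange the goal
  rw [show τ t * τ' t * d (β t)^(i+1) * d (τ t)^k
        = τ t * (τ' t * (d (β t)^(i+1) * d (τ t)^k)) by rw [mul_assoc, mul_assoc],
      show β' t * τ t * d (β t)^i * d (τ t)^(k+1)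
        = β' t * (τ t * (d (β t)^i * d (τ t)^(k+1))) by rw [mul_assoc, mul_assoc],
      expand1, expand2,
      mul_assoc (β' t) (d (β t)^i), mul_assoc (τ' t) (d (β t)^(i+1))]
  have hq' : (q:ℝ) = (i:ℝ) + 2 + (k:ℝ) := by rw [hk]; push_cast; ring
  rw [hq']
  have hi1 : ((i:ℝ)+1) ≠ 0 := by positivity
  have key2 : ((1:ℝ)/((i:ℝ)+1)) • (τ' t * (d (β t) ^ (i+1) * d (τ t) ^ (k+1)))
      + (τ t * (d (β' t) * (d (β t) ^ i * d (τ t) ^ (k+1))))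
      + (((k:ℝ)+1)/((i:ℝ)+1)) • (τ t * (d (τ' t) * (d (β t) ^ (i+1) * d (τ t) ^ k))) = 0 := by
    have h := congrArg (fun z => ((1:ℝ)/((i:ℝ)+1)) • z) key
    simp only [smul_add, smul_smul, smul_zero] at h
    rw [show (1/((i:ℝ)+1)) * ((i:ℝ)+1) = 1 by field_simp, one_smul,
        show (1/((i:ℝ)+1)) * ((k:ℝ)+1) = ((k:ℝ)+1)/((i:ℝ)+1) by ring] at h
    exact h
  linear_combination (norm := module) key2
end

section
/- Let β(t) be a smooth family of 1-forms on M with dβ(t) in the ideal of a family of codimension q foliations (so (q+1)-fold ideal products vanish and dβ̇ ∧ (dβ)^q = 0, plus β ∧ dβ̇ ∧ (dβ)^{q-1}-type cancellations from the ideal structure). Then (d/dt)(β ∧ (dβ)^q) = (q+1) β̇ ∧ (dβ)^q + q d(β̇ ∧ β ∧ (dβ)^{q−1}). Consequently, for q ≥ 2 the de Rham class of β̇ ∧ (dβ)^q equals 1/(q+1) times the time-derivative of the Godbillon-Vey class [β ∧ (dβ)^q]. -/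
open FormAlgebra

/-- Let `β(t)` be a smooth family of 1-forms on `M` with `dβ(t)` in the ideal
`I(t)` of a family of codimension `q` foliations (so that `(q+1)`-fold ideal
products vanish).  Then
`(d/dt)(β ∧ (dβ)^q) = (q+1) β̇ ∧ (dβ)^q + q d(β̇ ∧ β ∧ (dβ)^(q−1))`.
Consequently, for `q ≥ 2` the de Rham class of `β̇ ∧ (dβ)^q` equals `1/(q+1)`
times the time-derivative of the Godbillon-Vey class `[β ∧ (dβ)^q]`. -/
theorem statement18 {Ω : Type*} [NormedRing Ω] [NormedAlgebra ℝ Ω] [FormAlgebra Ω]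
    (q : ℕ) (hq : 1 ≤ q) (β β' : ℝ → Ω) (I : ℝ → Set Ω)
    (hβd : ∀ t, HasDerivAt β (β' t) t)
    (hβ : ∀ t, IsDeg 1 (β t)) (hβ' : ∀ t, IsDeg 1 (β' t))
    (hvanish : ∀ t (f : Fin (q + 1) → Ω), (∀ i, f i ∈ I t) → (List.ofFn f).prod = 0)
    (hdβI : ∀ t, d (β t) ∈ I t) :
    ∀ t, HasDerivAt (fun s => β s * (d (β s)) ^ q)
      (((q : ℝ) + 1) • (β' t * (d (β t)) ^ q)
        + (q : ℝ) • d (β' t * β t * (d (β t)) ^ (q - 1))) t := by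

  intro t
  obtain ⟨k, rfl⟩ : ∃ k, q = k + 1 := ⟨q - 1, (Nat.succ_pred_eq_of_pos hq).symm⟩
  have hb : IsDeg 1 (β t) := hβ t
  have hb' : IsDeg 1 (β' t) := hβ' t
  have hDdeg : IsDeg 2 (d (β t)) := isDeg_d hb
  have hD'deg : IsDeg 2 (d (β' t)) := isDeg_d hb'
  -- commutation facts
  have hcomm1 : d (β' t) * d (β t) = d (β t) * d (β' t) := by
    have h := deg_mul_comm (m := 2) (n := 2) (d (β' t)) (d (β t)) hD'deg hDdeg
    rw [show ((-1 : ℝ)) ^ (2 * 2) = 1 by norm_num, one_smul] at h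
    exact h
  have hc : Commute (d (β t)) (d (β' t)) := hcomm1.symm
  have hcomm2 : d (β' t) * β t = β t * d (β' t) := by
    have h := deg_mul_comm (m := 2) (n := 1) (d (β' t)) (β t) hD'deg hb
    rw [show ((-1 : ℝ)) ^ (2 * 1) = 1 by norm_num, one_smul] at h
    exact h
  -- derivative of s ↦ d (β s)
  have hdβ : HasDerivAt (fun s => d (β s)) (d (β' t)) t :=
    (FormAlgebra.d (Ω := Ω)).hasFDerivAt.comp_hasDerivAt t (hβd t)
  -- derivative of powers
  have hpow : ∀ n : ℕ, HasDerivAt (fun s => (d (β s)) ^ (n + 1))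
      (((n : ℝ) + 1) • (d (β' t) * (d (β t)) ^ n)) t := by
    intro n
    induction n with
    | zero => simpa using hdβ
    | succ m ih =>
      have h : HasDerivAt (fun s => (d (β s)) ^ (m + 1) * d (β s)) _ t := ih.mul hdβ
      have hfun : (fun s => (d (β s)) ^ (m + 1) * d (β s))
          = fun s => (d (β s)) ^ (m + 1 + 1) := by
        funext s; rw [← pow_succ]
      rw [hfun] at h
      have hval : ((m : ℝ) + 1) • (d (β' t) * (d (β t)) ^ m) * d (β t)
            + (d (β t)) ^ (m + 1) * d (β' t)
          = ((m : ℝ) + 1 + 1) • (d (β' t) * (d (β t)) ^ (m + 1)) := by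
        rw [(hc.pow_left (m + 1)).eq, smul_mul_assoc, mul_assoc, ← pow_succ]
        module
      rw [hval] at h
      convert h using 2
      push_cast; ring
  -- d of D^(j+1) vanishes
  have hdpow : ∀ j : ℕ, d ((d (β t)) ^ (j + 1)) = 0 := by
    intro j
    induction j with
    | zero => simpa using d_d (β t)
    | succ m ih =>
      have h := d_mul (m := 2) (d (β t)) ((d (β t)) ^ (m + 1)) hDdeg
      rw [← pow_succ'] at h
      rw [h, d_d, ih, zero_mul, mul_zero, smul_zero, add_zero]
  -- the key formula for d (β' t * β t * D^k)
  have hdkey : d (β' t * β t * (d (β t)) ^ k)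
      = β t * (d (β' t) * (d (β t)) ^ k) - β' t * (d (β t)) ^ (k + 1) := by
    have hdbb : d (β' t * β t) = d (β' t) * β t - β' t * d (β t) := by
      have h := d_mul (m := 1) (β' t) (β t) hb'
      rw [h, show ((-1 : ℝ)) ^ 1 = -1 by norm_num, neg_smul, one_smul,
        ← sub_eq_add_neg]
    cases k with
    | zero =>
      simp only [pow_zero, mul_one, pow_one, zero_add]
      rw [hdbb, hcomm2]
    | succ m =>
      have hbbdeg : IsDeg 2 (β' t * β t) := isDeg_mul hb' hb
      have h := d_mul (m := 2) (β' t * β t) ((d (β t)) ^ (m + 1)) hbbdeg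
      rw [show ((-1 : ℝ)) ^ 2 = 1 by norm_num, one_smul, hdpow m, mul_zero,
        add_zero, hdbb, sub_mul, hcomm2] at h
      rw [h, mul_assoc (β t), mul_assoc (β' t), ← pow_succ']
  -- assemble
  have h : HasDerivAt (fun s => β s * (d (β s)) ^ (k + 1)) _ t := (hβd t).mul (hpow k)
  rw [show k + 1 - 1 = k by omega, hdkey]
  convert h using 1
  rw [mul_smul_comm]
  push_cast
  module
end

section
/- Let α(t) = α_1 ∧ ... ∧ α_q be a smooth family of decomposable q-forms with dα = α ∧ β and (dβ)^q = α ∧ γ for a q-form γ with dβ ∧ γ = 0, and suppose α̇ = L_X α for a smooth time-dependent vector field X. Then β̇ ∧ (dβ)^q = d(β(X) (dβ)^q), so β̇ ∧ (dβ)^q is exact with primitive β(X)(dβ)^q lying in the ideal of the foliation. -/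
open FormAlgebra

/-!
Differentiating `dα = α ∧ β` in `t` and substituting Cartan's formula `α̇ = d(i_X α) + i_X dα`
for `α̇` (the terms with `β ∧ β = 0` and `d² = 0` drop out) leaves
`α ∧ β̇ = ± i_X α ∧ dβ + α ∧ d(β(X))`. Multiplying by `γ` kills the first term because
`dβ ∧ γ = 0`; since `(dβ)^q = α ∧ γ` is closed, what remains is `d(β(X) (dβ)^q)`.
-/

namespace FormAlgebra

variable {Ω : Type*} [NormedRing Ω] [NormedAlgebra ℝ Ω] [FormAlgebra Ω]

theorem mul_self_eq_zero_of_isDeg_one {b : Ω} (hb : IsDeg 1 b) : b * b = 0 := by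
  have h := deg_mul_comm b b hb hb
  rw [mul_one, pow_one, neg_one_smul] at h
  have h2 : (2 : ℝ) • (b * b) = 0 := by
    rw [two_smul]
    nth_rewrite 1 [h]
    exact neg_add_cancel _
  exact (smul_eq_zero.mp h2).resolve_left two_ne_zero

theorem isDeg_pow_succ {m : ℕ} {x : Ω} (hx : IsDeg m x) (n : ℕ) :
    IsDeg (m * (n + 1)) (x ^ (n + 1)) := by
  induction n with
  | zero => simpa using hx
  | succ n ih => simpa [pow_succ _ (n + 1), mul_add] using isDeg_mul ih hx

theorem d_pow_succ_eq_zero {m : ℕ} {x : Ω} (hx : IsDeg m x) (hdx : d x = 0) (n : ℕ) :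
    d (x ^ (n + 1)) = 0 := by
  induction n with
  | zero => simpa using hdx
  | succ n ih => simp [pow_succ _ (n + 1), d_mul _ _ (isDeg_pow_succ hx n), ih, hdx]

theorem d_deriv_eq_of_d_eq_mul {α β : ℝ → Ω} {a' b' : Ω} {t : ℝ}
    (hα : HasDerivAt α a' t) (hβ : HasDerivAt β b' t) (h : ∀ s, d (α s) = α s * β s) :
    d a' = a' * β t + α t * b' := by
  have hdα : HasDerivAt (fun s ↦ d (α s)) (d a') t :=
    (d : Ω →L[ℝ] Ω).hasFDerivAt.comp_hasDerivAt t hα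
  simp only [h] at hdα
  exact hdα.unique (hα.mul hβ)

/-- With `a` the `q`-form `α`, `ι` the contraction `i_X`, and `a'`, `b'` the time derivatives. -/
theorem mul_eq_of_cartan {p : ℕ} {a b a' b' : Ω} {ι : Ω →ₗ[ℝ] Ω}
    (ha : IsDeg (p + 1) a) (hb : IsDeg 1 b) (hιa : IsDeg p (ι a)) (hιb : IsDeg 0 (ι b))
    (hda : d a = a * b) (hda' : d a' = a' * b + a * b')
    (hιmul : ∀ (m : ℕ) (x y : Ω), IsDeg m x → ι (x * y) = ι x * y + (-1 : ℝ) ^ m • (x * ι y))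
    (hcartan : a' = d (ι a) + ι (d a)) :
    a * b' = (-1 : ℝ) ^ p • (ι a * d b) + a * d (ι b) := by
  have hιda : ι (d a) = ι a * b + (-1 : ℝ) ^ (p + 1) • (a * ι b) := by
    rw [hda]; exact hιmul _ _ _ ha
  have hιb_comm : ι b * b = b * ι b := by simpa using deg_mul_comm _ _ hιb hb
  have hsign : (-1 : ℝ) ^ (p + 1) * (-1) ^ (p + 1) = 1 := by
    rw [← mul_pow, neg_one_mul, neg_neg, one_pow]
  have hd_a' : d a' = d (ι a) * b + (-1 : ℝ) ^ p • (ι a * d b)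
      + (-1 : ℝ) ^ (p + 1) • (a * b * ι b) + a * d (ι b) := by
    rw [hcartan, map_add, d_d, zero_add, hιda, map_add, map_smul, d_mul _ _ hιa,
      d_mul _ _ ha, hda, smul_add, smul_smul, hsign, one_smul]
    abel
  have ha'_b : a' * b = d (ι a) * b + (-1 : ℝ) ^ (p + 1) • (a * b * ι b) := by
    rw [hcartan, hιda]
    simp only [add_mul, smul_mul_assoc, mul_assoc, mul_self_eq_zero_of_isDeg_one hb, hιb_comm,
      mul_zero, zero_add]
  calc a * b' = d a' - a' * b := by rw [hda']; abel
    _ = (-1 : ℝ) ^ p • (ι a * d b) + a * d (ι b) := by rw [hd_a', ha'_b]; abel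

theorem mul_d_pow_eq_d_mul_d_pow {p : ℕ} {a b b' c e f : Ω}
    (ha : IsDeg (p + 1) a) (hb : IsDeg 1 b) (hb' : IsDeg 1 b') (hf : IsDeg 0 f)
    (hpow : d b ^ (p + 1) = a * c) (hdbc : d b * c = 0)
    (hab' : a * b' = (-1 : ℝ) ^ p • (e * d b) + a * d f) :
    b' * d b ^ (p + 1) = d (f * d b ^ (p + 1)) := by
  have hb'_comm : b' * a = (-1 : ℝ) ^ (p + 1) • (a * b') := by
    simpa using deg_mul_comm _ _ hb' ha
  have hdf_comm : d f * a = (-1 : ℝ) ^ (p + 1) • (a * d f) := by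
    simpa using deg_mul_comm _ _ (isDeg_d hf) ha
  rw [d_mul _ _ hf, d_pow_succ_eq_zero (isDeg_d hb) (d_d b), mul_zero, smul_zero, add_zero, hpow,
    ← mul_assoc, ← mul_assoc, hb'_comm, hdf_comm, smul_mul_assoc, smul_mul_assoc, hab']
  simp only [add_mul, smul_mul_assoc, mul_assoc, hdbc, mul_zero, smul_zero, zero_add]

end FormAlgebra

theorem statement19_general {Ω : Type*} [NormedRing Ω] [NormedAlgebra ℝ Ω] [FormAlgebra Ω]
    (q : ℕ) (hq : 1 ≤ q) (α β γ α' β' : ℝ → Ω) (ι : ℝ → Ω →ₗ[ℝ] Ω)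
    (hαd : ∀ t, HasDerivAt α (α' t) t)
    (hβd : ∀ t, HasDerivAt β (β' t) t)
    (hα : ∀ t, IsDeg q (α t)) (hβ : ∀ t, IsDeg 1 (β t))
    (hβ' : ∀ t, IsDeg 1 (β' t))
    (heq1 : ∀ t, d (α t) = α t * β t)
    (hpow : ∀ t, (d (β t)) ^ q = α t * γ t)
    (hdβγ : ∀ t, d (β t) * γ t = 0)
    (hιmul : ∀ t (m : ℕ) (a b : Ω), IsDeg m a →
      ι t (a * b) = ι t a * b + (-1 : ℝ) ^ m • (a * ι t b))
    (hιdeg : ∀ t (n : ℕ) (a : Ω), IsDeg (n + 1) a → IsDeg n (ι t a))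
    (hLie : ∀ t, α' t = d (ι t (α t)) + ι t (d (α t))) :
    ∀ t, β' t * (d (β t)) ^ q = d (ι t (β t) * (d (β t)) ^ q) := by
  intro t
  obtain ⟨p, rfl⟩ : ∃ p, q = p + 1 := ⟨q - 1, by omega⟩
  have hιβ : IsDeg 0 (ι t (β t)) := hιdeg t 0 _ (hβ t)
  have hdα' : d (α' t) = α' t * β t + α t * β' t := d_deriv_eq_of_d_eq_mul (hαd t) (hβd t) heq1
  exact mul_d_pow_eq_d_mul_d_pow (hα t) (hβ t) (hβ' t) hιβ (hpow t) (hdβγ t)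
    (mul_eq_of_cartan (hα t) (hβ t) (hιdeg t p _ (hα t)) hιβ (heq1 t) hdα' (hιmul t) (hLie t))

/-- Let `α(t) = α₁ ∧ ... ∧ α_q` be a smooth family of decomposable `q`-forms with
`dα = α ∧ β` and `(dβ)^q = α ∧ γ` for a `q`-form `γ` with `dβ ∧ γ = 0`, and
suppose `α̇ = L_X α` for a smooth time-dependent vector field `X` (modelled by the
contraction antiderivations `ι t` and Cartan's formula `L_X = d ∘ i_X + i_X ∘ d`).
Then `β̇ ∧ (dβ)^q = d(β(X) (dβ)^q)`, so `β̇ ∧ (dβ)^q` is exact with primitive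
`β(X)(dβ)^q` lying in the ideal of the foliation. -/
theorem statement19 {Ω : Type*} [NormedRing Ω] [NormedAlgebra ℝ Ω] [FormAlgebra Ω]
    (q : ℕ) (hq : 1 ≤ q) (α β γ α' β' : ℝ → Ω) (ι : ℝ → Ω →ₗ[ℝ] Ω)
    (hαd : ∀ t, HasDerivAt α (α' t) t)
    (hβd : ∀ t, HasDerivAt β (β' t) t)
    (hα : ∀ t, IsDeg q (α t)) (hβ : ∀ t, IsDeg 1 (β t)) (hγ : ∀ t, IsDeg q (γ t))
    (hα' : ∀ t, IsDeg q (α' t)) (hβ' : ∀ t, IsDeg 1 (β' t))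
    (heq1 : ∀ t, d (α t) = α t * β t)
    (hpow : ∀ t, (d (β t)) ^ q = α t * γ t)
    (hdβγ : ∀ t, d (β t) * γ t = 0)
    (hιmul : ∀ t (m : ℕ) (a b : Ω), IsDeg m a →
      ι t (a * b) = ι t a * b + (-1 : ℝ) ^ m • (a * ι t b))
    (hιdeg : ∀ t (n : ℕ) (a : Ω), IsDeg (n + 1) a → IsDeg n (ι t a))
    (hι0 : ∀ t (a : Ω), IsDeg 0 a → ι t a = 0)
    (hLie : ∀ t, α' t = d (ι t (α t)) + ι t (d (α t))) :
    ∀ t, β' t * (d (β t)) ^ q = d (ι t (β t) * (d (β t)) ^ q) :=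
  statement19_general q hq α β γ α' β' ι hαd hβd hα hβ hβ' heq1 hpow hdβγ hιmul hιdeg hLie
end
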